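/- arXiv:1901.09212 — 2 statements merged into one kernel-verified Lean document; each statement's English description precedes it below -/
import Mathlib

section
/- Let a be an integer, α a real number with 0 < α < 1, and u : ℤ → ℝ. For each ω > 0 let z(ω, ·) : ℤ → ℝ satisfy z(ω, a) = 0 and z(ω, k) − z(ω, k−1) = −ω² z(ω, k) + u(k) for every integer k ≥ a+1. Then for every integer k ≥ a+1, the function ω ↦ ω μ_α(ω²) z(ω, k) is integrable on (0, +∞) and 2 ∫_0^{+∞} ω μ_α(ω²) z(ω, k) dω = {}_a∇_k^{-α} u(k). (Equivalence of the fractional sum with the output-form bilateral frequency distributed model, restricted to positive frequencies.) -/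
/-!
Solving the backward-Euler recursion gives `z(ω, k) = ∑ᵢ u(k - i) (1 + ω²)^{-(i+1)}`, so the
integral splits into finitely many terms. The substitutions `t = ω²` and `x = t / (1 + t)` turn
the `i`-th term into the beta integral `B(1 - α, i + α)`, and Euler's reflection formula
`Γ(α) Γ(1 - α) = π / sin(απ)` turns `(sin(απ) / π) B(1 - α, i + α)` into the coefficient
`Γ(α + i) / (Γ(α) Γ(i + 1))` of the fractional sum.
-/

/-- The `α`-th nabla fractional sum of `u : ℤ → ℝ` with initial instant `a`:
`{}_a∇_k^{-α} u(k) = ∑_{i=0}^{k-a-1} (Γ(α+i)/(Γ(α) Γ(i+1))) u(k−i)`. -/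
noncomputable def nablaFracSum (a : ℤ) (α : ℝ) (u : ℤ → ℝ) (k : ℤ) : ℝ :=
  ∑ i ∈ Finset.range (k - a).toNat,
    Real.Gamma (α + i) / (Real.Gamma α * Real.Gamma (i + 1)) * u (k - i)

open MeasureTheory Set Real

theorem ofReal_rpow_mul_one_sub_rpow {p q x : ℝ} (hx : x ∈ Ioo (0 : ℝ) 1) :
    ((x ^ (p - 1) * (1 - x) ^ (q - 1) : ℝ) : ℂ) =
      (x : ℂ) ^ ((p : ℂ) - 1) * (1 - (x : ℂ)) ^ ((q : ℂ) - 1) := by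
  rw [Complex.ofReal_mul, Complex.ofReal_cpow hx.1.le, Complex.ofReal_cpow (sub_nonneg.2 hx.2.le)]
  push_cast
  rfl

theorem integrableOn_rpow_mul_one_sub_rpow {p q : ℝ} (hp : 0 < p) (hq : 0 < q) :
    IntegrableOn (fun x : ℝ => x ^ (p - 1) * (1 - x) ^ (q - 1)) (Ioo 0 1) := by
  have hc := Complex.betaIntegral_convergent (u := p) (v := q) (by simpa) (by simpa)
  rw [intervalIntegrable_iff_integrableOn_Ioo_of_le zero_le_one] at hc
  exact (hc.congr_fun (fun x hx => (ofReal_rpow_mul_one_sub_rpow hx).symm) measurableSet_Ioo).re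

theorem integral_rpow_mul_one_sub_rpow {p q : ℝ} (hp : 0 < p) (hq : 0 < q) :
    ∫ x in Ioo (0 : ℝ) 1, x ^ (p - 1) * (1 - x) ^ (q - 1) =
      Gamma p * Gamma q / Gamma (p + q) := by
  have h : Complex.betaIntegral p q =
      ((∫ x in Ioo (0 : ℝ) 1, x ^ (p - 1) * (1 - x) ^ (q - 1) : ℝ) : ℂ) := by
    rw [Complex.betaIntegral, intervalIntegral.integral_of_le zero_le_one,
      integral_Ioc_eq_integral_Ioo, ← integral_complex_ofReal]
    exact setIntegral_congr_fun measurableSet_Ioo fun x hx =>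
      (ofReal_rpow_mul_one_sub_rpow hx).symm
  rw [← ProbabilityTheory.beta, ProbabilityTheory.beta_eq_betaIntegralReal p q hp hq, h,
    Complex.ofReal_re]

theorem integral_comp_sq_Ioi {E : Type*} [NormedAddCommGroup E] [NormedSpace ℝ E] (g : ℝ → E) :
    ∫ x in Ioi 0, (2 * x) • g (x ^ 2) = ∫ y in Ioi 0, g y := by
  rw [← integral_comp_rpow_Ioi g two_ne_zero]
  norm_num

theorem integrableOn_Ioi_comp_sq_iff {E : Type*} [NormedAddCommGroup E] [NormedSpace ℝ E]
    (g : ℝ → E) :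
    IntegrableOn (fun x => (2 * x) • g (x ^ 2)) (Ioi 0) ↔ IntegrableOn g (Ioi 0) := by
  rw [← integrableOn_Ioi_comp_rpow_iff g two_ne_zero]
  norm_num

theorem injOn_div_one_add_self : InjOn (fun t : ℝ => t / (1 + t)) (Ioi 0) := by
  intro x hx y hy h
  have hx' : 1 + x ≠ 0 := by linarith [mem_Ioi.1 hx]
  have hy' : 1 + y ≠ 0 := by linarith [mem_Ioi.1 hy]
  field_simp at h
  linarith

theorem image_div_one_add_self_Ioi : (fun t : ℝ => t / (1 + t)) '' Ioi 0 = Ioo 0 1 := by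
  ext y
  constructor
  · rintro ⟨t, ht : 0 < t, rfl⟩
    exact ⟨by positivity, (div_lt_one (by linarith)).2 (by linarith)⟩
  · rintro ⟨hy0, hy1⟩
    have h1y : 1 - y ≠ 0 := by linarith
    refine ⟨y / (1 - y), div_pos hy0 (by linarith), ?_⟩
    field_simp
    ring

theorem abs_inv_sq_smul_beta_comp_div_one_add_self {p q t : ℝ} (ht : 0 < t) :
    |((1 + t) ^ 2)⁻¹| • ((t / (1 + t)) ^ (p - 1) * (1 - t / (1 + t)) ^ (q - 1)) =
      t ^ (p - 1) * (1 + t) ^ (-(p + q)) := by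
  have h1 : 0 < 1 + t := by linarith
  have hsub : 1 - t / (1 + t) = (1 + t)⁻¹ := by field_simp; ring
  have hsq : ((1 + t) ^ 2)⁻¹ = (1 + t) ^ (-2 : ℝ) := by
    rw [rpow_neg h1.le, rpow_two]
  rw [smul_eq_mul, abs_of_pos (by positivity), hsub, hsq, div_rpow ht.le h1.le,
    inv_rpow h1.le, ← rpow_neg h1.le, div_eq_mul_inv, ← rpow_neg h1.le]
  have hexp : (1 + t) ^ (-2 : ℝ) * (1 + t) ^ (-(p - 1)) * (1 + t) ^ (-(q - 1)) =
      (1 + t) ^ (-(p + q)) := by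
    rw [← rpow_add h1, ← rpow_add h1]
    ring_nf
  rw [← hexp]
  ring

theorem hasDerivAt_div_one_add_self {t : ℝ} (ht : 1 + t ≠ 0) :
    HasDerivAt (fun t : ℝ => t / (1 + t)) ((1 + t) ^ 2)⁻¹ t := by
  have h := (hasDerivAt_id' t).div ((hasDerivAt_id' t).const_add 1) ht
  rwa [one_mul, mul_one, add_sub_cancel_right, one_div] at h

theorem integrableOn_rpow_mul_one_add_rpow {p q : ℝ} (hp : 0 < p) (hq : 0 < q) :
    IntegrableOn (fun t : ℝ => t ^ (p - 1) * (1 + t) ^ (-(p + q))) (Ioi 0) := by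
  have h := integrableOn_image_iff_integrableOn_abs_deriv_smul measurableSet_Ioi
    (fun t (ht : 0 < t) => (hasDerivAt_div_one_add_self (by linarith)).hasDerivWithinAt)
    injOn_div_one_add_self (fun x : ℝ => x ^ (p - 1) * (1 - x) ^ (q - 1))
  rw [image_div_one_add_self_Ioi] at h
  exact (h.1 (integrableOn_rpow_mul_one_sub_rpow hp hq)).congr_fun
    (fun t ht => abs_inv_sq_smul_beta_comp_div_one_add_self ht) measurableSet_Ioi

theorem integral_rpow_mul_one_add_rpow {p q : ℝ} (hp : 0 < p) (hq : 0 < q) :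
    ∫ t in Ioi (0 : ℝ), t ^ (p - 1) * (1 + t) ^ (-(p + q)) =
      Gamma p * Gamma q / Gamma (p + q) := by
  have h := integral_image_eq_integral_abs_deriv_smul measurableSet_Ioi
    (fun t (ht : 0 < t) => (hasDerivAt_div_one_add_self (by linarith)).hasDerivWithinAt)
    injOn_div_one_add_self (fun x : ℝ => x ^ (p - 1) * (1 - x) ^ (q - 1))
  rw [image_div_one_add_self_Ioi, integral_rpow_mul_one_sub_rpow hp hq,
    setIntegral_congr_fun measurableSet_Ioi
      fun t ht => abs_inv_sq_smul_beta_comp_div_one_add_self ht] at h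
  exact h.symm

theorem backwardEuler_eq_sum {a : ℤ} {c : ℝ} {u y : ℤ → ℝ} (hc : 1 + c ≠ 0) (h0 : y a = 0)
    (hy : ∀ k, a + 1 ≤ k → y k - y (k - 1) = -c * y k + u k) (n : ℕ) :
    y (a + n) = ∑ i ∈ Finset.range n, u (a + n - i) * ((1 + c)⁻¹) ^ (i + 1) := by
  induction n with
  | zero => simpa using h0
  | succ n ih =>
    have hstep : y (a + (n + 1 : ℕ)) = (y (a + n) + u (a + (n + 1 : ℕ))) * (1 + c)⁻¹ := by
      have h := hy (a + (n + 1 : ℕ)) (by omega)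
      rw [show a + ((n + 1 : ℕ) : ℤ) - 1 = a + n by push_cast; ring] at h
      field_simp
      linarith
    rw [Finset.sum_range_succ', hstep, ih, add_mul, Finset.sum_mul]
    congr 1
    · refine Finset.sum_congr rfl fun i _ => ?_
      rw [show a + ((n + 1 : ℕ) : ℤ) - ((i + 1 : ℕ) : ℤ) = a + n - i by push_cast; ring]
      ring
    · simp

theorem sin_mul_pi_div_pi_mul_Gamma_one_sub {α : ℝ} (hα : ∀ n : ℤ, α ≠ n) :
    sin (α * π) / π * Gamma (1 - α) = (Gamma α)⁻¹ := by
  have hΓ : Gamma α ≠ 0 := Gamma_ne_zero fun m h => hα (-m) (by rw [h]; push_cast; ring)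
  have hsin : sin (α * π) ≠ 0 := sin_ne_zero_iff.2 fun n h =>
    hα n (mul_right_cancel₀ pi_ne_zero h).symm
  have hrefl := Gamma_mul_Gamma_one_sub α
  rw [mul_comm π α] at hrefl
  field_simp
  rw [mul_assoc, mul_comm (Gamma _), hrefl]
  field_simp

section FrequencyKernel

variable {α : ℝ} (n : ℕ)

theorem weight_mul_inv_one_add_sq_pow_eq {ω : ℝ} (hω : 0 < ω) :
    ω * (sin (α * π) / (π * (ω ^ 2) ^ α)) * ((1 + ω ^ 2)⁻¹) ^ (n + 1) =
      sin (α * π) / (2 * π) *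
        ((2 * ω) • ((ω ^ 2) ^ ((1 - α) - 1) * (1 + ω ^ 2) ^ (-((1 - α) + (n + α))))) := by
  have h1 : 0 < 1 + ω ^ 2 := by positivity
  have hexp : -((1 - α) + (n + α)) = -((n + 1 : ℕ) : ℝ) := by push_cast; ring
  rw [sub_sub_cancel_left, hexp, rpow_neg h1.le, rpow_natCast, rpow_neg (by positivity),
    smul_eq_mul, inv_pow]
  field_simp

variable (hα0 : 0 < α) (hα1 : α < 1)

include hα0 hα1

theorem integrableOn_weight_mul_inv_one_add_sq_pow :
    IntegrableOn (fun ω : ℝ => ω * (sin (α * π) / (π * (ω ^ 2) ^ α)) * ((1 + ω ^ 2)⁻¹) ^ (n + 1))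
      (Ioi 0) := by
  have h := (integrableOn_Ioi_comp_sq_iff _).2
    (integrableOn_rpow_mul_one_add_rpow (p := 1 - α) (q := n + α) (by linarith) (by positivity))
  exact IntegrableOn.congr_fun (h.const_mul (sin (α * π) / (2 * π)))
    (fun ω hω => (weight_mul_inv_one_add_sq_pow_eq n hω).symm) measurableSet_Ioi

theorem two_mul_integral_weight_mul_inv_one_add_sq_pow :
    2 * ∫ ω in Ioi (0 : ℝ), ω * (sin (α * π) / (π * (ω ^ 2) ^ α)) * ((1 + ω ^ 2)⁻¹) ^ (n + 1) =
      Gamma (α + n) / (Gamma α * Gamma (n + 1)) := by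
  rw [setIntegral_congr_fun measurableSet_Ioi fun ω hω => weight_mul_inv_one_add_sq_pow_eq n hω,
    integral_const_mul,
    integral_comp_sq_Ioi fun t => t ^ ((1 - α) - 1) * (1 + t) ^ (-((1 - α) + (n + α))),
    integral_rpow_mul_one_add_rpow (by linarith) (by positivity)]
  have hΓ := sin_mul_pi_div_pi_mul_Gamma_one_sub (α := α) fun m h => by
    have h0 : (0 : ℤ) < m := by exact_mod_cast h ▸ hα0
    have h1 : m < 1 := by exact_mod_cast h ▸ hα1
    omega
  rw [show 1 - α + (n + α) = (n : ℝ) + 1 by ring, add_comm (n : ℝ) α]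
  calc _ = sin (α * π) / π * Gamma (1 - α) * (Gamma (α + n) / Gamma (n + 1)) := by ring
    _ = _ := by rw [hΓ]; ring

end FrequencyKernel

/-- **Output-form bilateral frequency distributed model (positive frequencies).**
If for each `ω > 0`, `z(ω,·)` satisfies `z(ω,a) = 0` and
`z(ω,k) − z(ω,k−1) = −ω² z(ω,k) + u(k)` for `k ≥ a+1`, then for every `k ≥ a+1` the
function `ω ↦ ω μ_α(ω²) z(ω,k)` is integrable on `(0,∞)` and
`2 ∫_0^∞ ω μ_α(ω²) z(ω,k) dω = {}_a∇_k^{-α} u(k)`, where `μ_α(ω) = sin(απ)/(π ω^α)`. -/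
theorem bilateral_output_form_frequency_distributed_model
    (a : ℤ) (α : ℝ) (hα0 : 0 < α) (hα1 : α < 1) (u : ℤ → ℝ)
    (z : ℝ → ℤ → ℝ)
    (hz0 : ∀ ω : ℝ, 0 < ω → z ω a = 0)
    (hz : ∀ ω : ℝ, 0 < ω → ∀ k : ℤ, a + 1 ≤ k →
      z ω k - z ω (k - 1) = -(ω ^ 2) * z ω k + u k) :
    ∀ k : ℤ, a + 1 ≤ k →
      MeasureTheory.IntegrableOn
        (fun ω : ℝ => ω * (Real.sin (α * Real.pi) / (Real.pi * (ω ^ 2) ^ α)) * z ω k)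
        (Set.Ioi (0 : ℝ)) ∧
      2 * (∫ ω in Set.Ioi (0 : ℝ),
          ω * (Real.sin (α * Real.pi) / (Real.pi * (ω ^ 2) ^ α)) * z ω k) =
        nablaFracSum a α u k := by
  intro k hk
  obtain ⟨n, rfl⟩ : ∃ n : ℕ, k = a + n := ⟨(k - a).toNat, by omega⟩
  have hsum : ∀ ω ∈ Ioi (0 : ℝ),
      ω * (sin (α * π) / (π * (ω ^ 2) ^ α)) * z ω (a + n) =
        ∑ i ∈ Finset.range n,
          u (a + n - i) * (ω * (sin (α * π) / (π * (ω ^ 2) ^ α)) * ((1 + ω ^ 2)⁻¹) ^ (i + 1)) :=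
    fun ω hω => by
      rw [backwardEuler_eq_sum (by positivity) (hz0 ω hω) (hz ω hω), Finset.mul_sum]
      exact Finset.sum_congr rfl fun i _ => by ring
  have hint : ∀ i ∈ Finset.range n, IntegrableOn
      (fun ω => u (a + n - i) *
        (ω * (sin (α * π) / (π * (ω ^ 2) ^ α)) * ((1 + ω ^ 2)⁻¹) ^ (i + 1))) (Ioi 0) :=
    fun i _ => (integrableOn_weight_mul_inv_one_add_sq_pow i hα0 hα1).const_mul _
  refine ⟨IntegrableOn.congr_fun (integrable_finsetSum _ hint) (fun ω hω => (hsum ω hω).symm)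
    measurableSet_Ioi, ?_⟩
  rw [setIntegral_congr_fun measurableSet_Ioi hsum, integral_finsetSum _ hint, Finset.mul_sum,
    nablaFracSum, show (a + n - a).toNat = n by omega]
  refine Finset.sum_congr rfl fun i _ => ?_
  rw [integral_const_mul, mul_left_comm, two_mul_integral_weight_mul_inv_one_add_sq_pow i hα0 hα1,
    mul_comm]
end

section
/- Let a be an integer, α a real number with 0 < α < 1, and u : ℤ → ℝ with u(k) = 0 for k ≤ a. For each ω > 0 let z(ω, ·) : ℤ → ℝ satisfy z(ω, a) = 0 and z(ω, k) − z(ω, k−1) = −ω z(ω, k) + u(k) for k ≥ a+1, and define y(k) = ∫_0^{+∞} μ_α(ω) z(ω, k) dω for k ≥ a+1 with y(a) = 0. Then y satisfies the Caputo fractional difference equation {}_a∇_k^{α} y(k) = u(k) for every integer k ≥ a+1. (The frequency distributed model with zero initial state realizes the fractional difference equation.) -/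
/-- The nabla Caputo fractional difference of order `0 < α < 1`:
`{}_a∇_k^{α} y(k) = {}_a∇_k^{-(1−α)} (∇y)(k)`, where `∇y(k) = y(k) − y(k−1)`. -/
noncomputable def nablaCaputoDiff (a : ℤ) (α : ℝ) (y : ℤ → ℝ) (k : ℤ) : ℝ :=
  nablaFracSum a (1 - α) (fun j => y j - y (j - 1)) k

/-!
Pass to generating series in the backward shift `X`: a sequence `v` started at `a` becomes
`∑_{j ≥ 1} v (a + j) X ^ j`. Then `∇` is multiplication by `1 - X` (for `v a = 0`), and since
`Γ(β + i) / (Γ(β) i!) = multichoose β i`, the fractional sum of order `β` is multiplication by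
`(1 - X) ^ (-β)`. The mode `z(ω, ·)` has series `(1 + ω - X)⁻¹ U`, and integrating the
coefficients `(1 + ω) ^ (-(m + 1))` of `(1 + ω - X)⁻¹` against `μ_α` gives, through the
substitution `ω = t / (1 - t)` into a Beta integral and Euler's reflection formula, the
coefficients `multichoose α m` of `(1 - X) ^ (-α)`. So `Y = (1 - X) ^ (-α) U`, and the Caputo
difference of `y` has series `(1 - X) ^ (α - 1) (1 - X) (1 - X) ^ (-α) U = U`.
-/

open Set MeasureTheory PowerSeries

theorem Real.Gamma_add_nat_eq_ascPochhammer_mul {α : ℝ} (hα : 0 < α) (m : ℕ) :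
    Real.Gamma (α + m) = (ascPochhammer ℝ m).eval α * Real.Gamma α := by
  induction m with
  | zero => simp
  | succ m ih =>
    rw [Nat.cast_succ, ← add_assoc, Real.Gamma_add_one (by positivity), ih,
      ascPochhammer_succ_eval]
    ring

theorem Real.Gamma_add_nat_div_eq_multichoose {α : ℝ} (hα : 0 < α) (m : ℕ) :
    Real.Gamma (α + m) / (Real.Gamma α * Real.Gamma (m + 1)) = Ring.multichoose α m := by
  have hfact := Ring.factorial_nsmul_multichoose_eq_ascPochhammer α m
  rw [Polynomial.ascPochhammer_smeval_eq_eval, nsmul_eq_mul] at hfact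
  rw [Real.Gamma_add_nat_eq_ascPochhammer_mul hα, Real.Gamma_nat_eq_factorial, ← hfact]
  have := (Real.Gamma_pos_of_pos hα).ne'
  field_simp

namespace PowerSeries

variable {R : Type*} [CommRing R] [BinomialRing R]

/-- The power series `(1 - X) ^ r` with exponent `r` in a binomial ring. -/
noncomputable def oneSubPow (r : R) : R⟦X⟧ :=
  rescale (-1) (binomialSeries R r)

theorem oneSubPow_add (r s : R) : oneSubPow (r + s) = oneSubPow r * oneSubPow s := by
  simp [oneSubPow]

theorem oneSubPow_zero : oneSubPow (0 : R) = 1 := by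
  simp [oneSubPow]

theorem oneSubPow_one [NatPowAssoc R] : oneSubPow (1 : R) = 1 - X := by
  simpa [oneSubPow, sub_eq_add_neg] using
    congrArg (rescale (-1 : R)) (binomialSeries_nat (R := R) (A := R) 1)

theorem coeff_oneSubPow_neg [NatPowAssoc R] (r : R) (n : ℕ) :
    coeff n (oneSubPow (-r)) = Ring.multichoose r n := by
  rw [oneSubPow, coeff_rescale, binomialSeries_coeff, smul_eq_mul, mul_one, Ring.choose_neg',
    Units.smul_def, Int.coe_negOnePow_natCast, zsmul_eq_mul, ← mul_assoc]
  push_cast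
  rw [← mul_pow]
  simp

end PowerSeries

noncomputable def genSeries (a : ℤ) (v : ℤ → ℝ) : ℝ⟦X⟧ :=
  mk fun j => if j = 0 then 0 else v (a + j)

@[simp]
theorem coeff_genSeries_zero (a : ℤ) (v : ℤ → ℝ) : coeff 0 (genSeries a v) = 0 := by
  simp [genSeries]

theorem coeff_genSeries {n : ℕ} (hn : n ≠ 0) (a : ℤ) (v : ℤ → ℝ) :
    coeff n (genSeries a v) = v (a + n) := by
  simp [genSeries, hn]

theorem genSeries_congr {a : ℤ} {v w : ℤ → ℝ} (h : ∀ k, a + 1 ≤ k → v k = w k) :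
    genSeries a v = genSeries a w := by
  ext n
  rcases eq_or_ne n 0 with rfl | hn
  · simp
  · rw [coeff_genSeries hn, coeff_genSeries hn, h _ (by omega)]

theorem genSeries_const_mul_add (a : ℤ) (c : ℝ) (v w : ℤ → ℝ) :
    genSeries a (fun k => c * v k + w k) = C c * genSeries a v + genSeries a w := by
  ext n
  by_cases hn : n = 0 <;> simp [genSeries, hn]

theorem genSeries_nabla {a : ℤ} {y : ℤ → ℝ} (hy : y a = 0) :
    genSeries a (fun j => y j - y (j - 1)) = (1 - X) * genSeries a y := by
  ext n
  rw [sub_mul, one_mul, map_sub]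
  rcases n with _ | n
  · rw [coeff_zero_X_mul, coeff_genSeries_zero, coeff_genSeries_zero, sub_zero]
  · rw [coeff_succ_X_mul, coeff_genSeries n.succ_ne_zero,
      coeff_genSeries n.succ_ne_zero]
    rcases eq_or_ne n 0 with rfl | hn
    · simp [hy]
    · rw [coeff_genSeries hn, Nat.cast_succ, ← add_assoc, add_sub_cancel_right]

theorem nablaFracSum_eq_coeff {β : ℝ} (hβ : 0 < β) (a : ℤ) (v : ℤ → ℝ) (n : ℕ) :
    nablaFracSum a β v (a + n) = coeff n (oneSubPow (-β) * genSeries a v) := by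
  rw [coeff_mul, Finset.Nat.sum_antidiagonal_eq_sum_range_succ_mk, Finset.sum_range_succ,
    Nat.sub_self, coeff_genSeries_zero, mul_zero, add_zero, nablaFracSum, add_sub_cancel_left,
    Int.toNat_natCast]
  refine Finset.sum_congr rfl fun i hi => ?_
  rw [Finset.mem_range] at hi
  rw [coeff_oneSubPow_neg, coeff_genSeries (by omega), Real.Gamma_add_nat_div_eq_multichoose hβ]
  push_cast [hi.le]
  rw [add_sub_assoc]

theorem nablaCaputoDiff_eq_of_genSeries_eq {a : ℤ} {α : ℝ} (hα : α < 1) {y u : ℤ → ℝ}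
    (hya : y a = 0) (hy : genSeries a y = oneSubPow (-α) * genSeries a u) {k : ℤ}
    (hk : a + 1 ≤ k) : nablaCaputoDiff a α y k = u k := by
  obtain ⟨n, rfl⟩ : ∃ n : ℕ, k = a + n := ⟨(k - a).toNat, by omega⟩
  have hsum : -(1 - α) + 1 + -α = 0 := by ring
  rw [nablaCaputoDiff, nablaFracSum_eq_coeff (by linarith), genSeries_nabla hya, hy,
    ← oneSubPow_one, ← mul_assoc, ← mul_assoc, ← oneSubPow_add, ← oneSubPow_add, hsum,
    oneSubPow_zero, one_mul, coeff_genSeries (by omega)]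

/-- The power series of `(1 + ω - X)⁻¹`. -/
noncomputable def resolventSeries (ω : ℝ) : ℝ⟦X⟧ :=
  mk fun m => ((1 + ω)⁻¹) ^ (m + 1)

theorem resolventSeries_eq_invUnitsSub {ω : ℝ} (hω : 1 + ω ≠ 0) :
    resolventSeries ω = invUnitsSub (Units.mk0 (1 + ω) hω) := by
  ext n
  simp [resolventSeries, coeff_invUnitsSub, one_divp]

theorem genSeries_eq_resolventSeries_mul {a : ℤ} {ω : ℝ} (hω : 1 + ω ≠ 0) {z u : ℤ → ℝ}
    (hz0 : z a = 0) (hz : ∀ k, a + 1 ≤ k → z k - z (k - 1) = -ω * z k + u k) :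
    genSeries a z = resolventSeries ω * genSeries a u := by
  have hrecursion : (C (1 + ω) - X) * genSeries a z = genSeries a u := by
    have h := genSeries_congr hz
    rw [genSeries_nabla hz0, genSeries_const_mul_add, map_neg] at h
    rw [map_add, map_one]
    linear_combination h
  have hinv := invUnitsSub_mul_sub (Units.mk0 (1 + ω) hω)
  rw [Units.val_mk0] at hinv
  rw [← hrecursion, ← mul_assoc, resolventSeries_eq_invUnitsSub hω, hinv, one_mul]

theorem integral_Ioo_rpow_mul_one_sub_rpow {p q : ℝ} (hp : 0 < p) (hq : 0 < q) :
    ∫ x in Ioo (0 : ℝ) 1, x ^ (p - 1) * (1 - x) ^ (q - 1)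
      = Real.Gamma p * Real.Gamma q / Real.Gamma (p + q) := by
  have hbeta := Complex.Gamma_mul_Gamma_eq_betaIntegral
    (s := (p : ℂ)) (t := (q : ℂ)) (by simpa using hp) (by simpa using hq)
  have hreal : Complex.betaIntegral p q
      = ((∫ x in (0 : ℝ)..1, x ^ (p - 1) * (1 - x) ^ (q - 1) : ℝ) : ℂ) := by
    rw [← intervalIntegral.integral_ofReal, Complex.betaIntegral]
    refine intervalIntegral.integral_congr fun x hx => ?_
    rw [uIcc_of_le zero_le_one] at hx
    rw [Complex.ofReal_mul, Complex.ofReal_cpow hx.1, Complex.ofReal_cpow (by linarith [hx.2])]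
    push_cast
    ring
  rw [hreal, ← Complex.ofReal_add, Complex.Gamma_ofReal, Complex.Gamma_ofReal,
    Complex.Gamma_ofReal, ← Complex.ofReal_mul, ← Complex.ofReal_mul, Complex.ofReal_inj,
    intervalIntegral.integral_of_le zero_le_one, integral_Ioc_eq_integral_Ioo] at hbeta
  rw [hbeta, mul_div_cancel_left₀ _ (Real.Gamma_pos_of_pos (by linarith)).ne']

theorem image_div_one_sub_Ioo : (fun t : ℝ => t / (1 - t)) '' Ioo 0 1 = Ioi 0 := by
  ext ω
  constructor
  · rintro ⟨t, ⟨ht0, ht1⟩, rfl⟩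
    exact div_pos ht0 (by linarith)
  · intro hω
    rw [mem_Ioi] at hω
    refine ⟨ω / (1 + ω), ⟨by positivity, by rw [div_lt_one (by positivity)]; linarith⟩, ?_⟩
    field_simp
    ring

theorem injOn_div_one_sub_Ioo : InjOn (fun t : ℝ => t / (1 - t)) (Ioo 0 1) := by
  intro s hs t ht h
  have hs1 : 1 - s ≠ 0 := by linarith [hs.2]
  have ht1 : 1 - t ≠ 0 := by linarith [ht.2]
  field_simp at h
  linarith

theorem hasDerivAt_div_one_sub {t : ℝ} (ht : t ≠ 1) :
    HasDerivAt (fun t : ℝ => t / (1 - t)) ((1 - t) ^ 2)⁻¹ t := by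
  have h1t : 1 - t ≠ 0 := sub_ne_zero.mpr (Ne.symm ht)
  have h : HasDerivAt (fun t : ℝ => t / (1 - t)) ((1 * (1 - t) - t * (0 - 1)) / (1 - t) ^ 2) t :=
    (hasDerivAt_id t).div ((hasDerivAt_const t 1).sub (hasDerivAt_id t)) h1t
  convert h using 1
  ring

theorem integral_Ioi_rpow_mul_one_add_rpow {p q : ℝ} (hp : 0 < p) (hq : 0 < q) :
    ∫ ω in Ioi (0 : ℝ), ω ^ (p - 1) * (1 + ω) ^ (-(p + q))
      = Real.Gamma p * Real.Gamma q / Real.Gamma (p + q) := by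
  rw [← image_div_one_sub_Ioo, integral_image_eq_integral_abs_deriv_smul measurableSet_Ioo
    (fun t ht => (hasDerivAt_div_one_sub ht.2.ne).hasDerivWithinAt) injOn_div_one_sub_Ioo,
    ← integral_Ioo_rpow_mul_one_sub_rpow hp hq]
  refine setIntegral_congr_fun measurableSet_Ioo fun t ⟨ht0, ht1⟩ => ?_
  have h1t : 0 < 1 - t := by linarith
  have hinv : 1 + t / (1 - t) = (1 - t)⁻¹ := by field_simp; ring
  have hexp : (1 - t) ^ (q - 1) = (1 - t) ^ (p + q) / (1 - t) ^ (p - 1) / (1 - t) ^ 2 := by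
    rw [← Real.rpow_sub h1t, ← Real.rpow_natCast, ← Real.rpow_sub h1t]
    ring_nf
  simp only [smul_eq_mul]
  rw [abs_of_pos (by positivity), hinv, Real.div_rpow ht0.le h1t.le, Real.inv_rpow h1t.le,
    Real.rpow_neg (by positivity), inv_inv, hexp]
  field_simp

theorem integral_Ioi_weight_mul_inv_one_add_pow {α : ℝ} (hα0 : 0 < α) (hα1 : α < 1) (m : ℕ) :
    ∫ ω in Ioi (0 : ℝ), Real.sin (α * Real.pi) / (Real.pi * ω ^ α) * ((1 + ω)⁻¹) ^ (m + 1)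
      = Real.Gamma (α + m) / (Real.Gamma α * Real.Gamma (m + 1)) := by
  have hβ : 0 < 1 - α := by linarith
  have hbetaForm : ∀ ω ∈ Ioi (0 : ℝ),
      Real.sin (α * Real.pi) / (Real.pi * ω ^ α) * ((1 + ω)⁻¹) ^ (m + 1)
        = Real.sin (α * Real.pi) / Real.pi
          * (ω ^ ((1 - α) - 1) * (1 + ω) ^ (-((1 - α) + (m + α)))) := by
    intro ω hω
    rw [mem_Ioi] at hω
    rw [show (1 - α) - 1 = -α by ring,
      show (1 - α) + (m + α) = ((m + 1 : ℕ) : ℝ) by push_cast; ring, Real.rpow_neg hω.le,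
      Real.rpow_neg (by positivity), Real.rpow_natCast, inv_pow]
    field_simp
  have hreflection : Real.Gamma α * Real.Gamma (1 - α) * Real.sin (α * Real.pi) = Real.pi := by
    rw [Real.Gamma_mul_Gamma_one_sub, mul_comm Real.pi α]
    exact div_mul_cancel₀ _ (Real.sin_pos_of_pos_of_lt_pi (by positivity)
      (by nlinarith [Real.pi_pos])).ne'
  rw [setIntegral_congr_fun measurableSet_Ioi hbetaForm, integral_const_mul,
    integral_Ioi_rpow_mul_one_add_rpow hβ (by positivity),
    show (1 - α) + (m + α) = (m : ℝ) + 1 by ring, add_comm α]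
  have := Real.Gamma_pos_of_pos hα0
  have := Real.Gamma_pos_of_pos (show (0 : ℝ) < m + 1 by positivity)
  field_simp
  linear_combination hreflection

theorem integral_Ioi_weight_mul_coeff_resolventSeries_mul {α : ℝ} (hα0 : 0 < α) (hα1 : α < 1)
    (V : ℝ⟦X⟧) (n : ℕ) :
    ∫ ω in Ioi (0 : ℝ), Real.sin (α * Real.pi) / (Real.pi * ω ^ α)
        * coeff n (resolventSeries ω * V)
      = coeff n (oneSubPow (-α) * V) := by
  have hmoment := integral_Ioi_weight_mul_inv_one_add_pow hα0 hα1
  have hintegrable (m : ℕ) : IntegrableOn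
      (fun ω => Real.sin (α * Real.pi) / (Real.pi * ω ^ α) * ((1 + ω)⁻¹) ^ (m + 1)) (Ioi 0) := by
    refine Integrable.of_integral_ne_zero ?_
    rw [hmoment]
    have := Real.Gamma_pos_of_pos hα0
    have := Real.Gamma_pos_of_pos (show (0 : ℝ) < m + 1 by positivity)
    positivity
  simp only [coeff_mul, Finset.mul_sum, resolventSeries, coeff_mk, ← mul_assoc]
  rw [integral_finsetSum _ fun ij _ => (hintegrable ij.1).mul_const _]
  refine Finset.sum_congr rfl fun ij _ => ?_
  rw [integral_mul_const, hmoment, Real.Gamma_add_nat_div_eq_multichoose hα0, coeff_oneSubPow_neg]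

theorem frequency_distributed_model_realization_general
    (a : ℤ) (α : ℝ) (hα0 : 0 < α) (hα1 : α < 1) (u : ℤ → ℝ)
    (z : ℝ → ℤ → ℝ)
    (hz0 : ∀ ω : ℝ, 0 < ω → z ω a = 0)
    (hz : ∀ ω : ℝ, 0 < ω → ∀ k : ℤ, a + 1 ≤ k →
      z ω k - z ω (k - 1) = -ω * z ω k + u k)
    (y : ℤ → ℝ) (hya : y a = 0)
    (hy : ∀ k : ℤ, a + 1 ≤ k →
      y k = ∫ ω in Set.Ioi (0 : ℝ),
        Real.sin (α * Real.pi) / (Real.pi * ω ^ α) * z ω k) :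
    ∀ k : ℤ, a + 1 ≤ k → nablaCaputoDiff a α y k = u k := by
  refine fun k hk => nablaCaputoDiff_eq_of_genSeries_eq hα1 hya ?_ hk
  ext n
  rcases eq_or_ne n 0 with rfl | hn
  · simp [coeff_mul]
  · rw [coeff_genSeries hn, hy _ (by omega),
      ← integral_Ioi_weight_mul_coeff_resolventSeries_mul hα0 hα1]
    refine setIntegral_congr_fun measurableSet_Ioi fun ω hω => ?_
    rw [← genSeries_eq_resolventSeries_mul (by linarith [mem_Ioi.mp hω]) (hz0 ω hω) (hz ω hω),
      coeff_genSeries hn]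

/-- **The frequency distributed model realizes the fractional difference equation.**
Suppose `u(k) = 0` for `k ≤ a`; for each `ω > 0` let `z(ω,·)` satisfy `z(ω,a) = 0` and
`z(ω,k) − z(ω,k−1) = −ω z(ω,k) + u(k)` for `k ≥ a+1`; and let
`y(k) = ∫_0^∞ μ_α(ω) z(ω,k) dω` for `k ≥ a+1` with `y(a) = 0`. Then
`{}_a∇_k^{α} y(k) = u(k)` for every integer `k ≥ a+1`. -/
theorem frequency_distributed_model_realization
    (a : ℤ) (α : ℝ) (hα0 : 0 < α) (hα1 : α < 1) (u : ℤ → ℝ)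
    (hu0 : ∀ k : ℤ, k ≤ a → u k = 0)
    (z : ℝ → ℤ → ℝ)
    (hz0 : ∀ ω : ℝ, 0 < ω → z ω a = 0)
    (hz : ∀ ω : ℝ, 0 < ω → ∀ k : ℤ, a + 1 ≤ k →
      z ω k - z ω (k - 1) = -ω * z ω k + u k)
    (y : ℤ → ℝ) (hya : y a = 0)
    (hy : ∀ k : ℤ, a + 1 ≤ k →
      y k = ∫ ω in Set.Ioi (0 : ℝ),
        Real.sin (α * Real.pi) / (Real.pi * ω ^ α) * z ω k) :
    ∀ k : ℤ, a + 1 ≤ k → nablaCaputoDiff a α y k = u k :=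
  frequency_distributed_model_realization_general a α hα0 hα1 u z hz0 hz y hya hy
end
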